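/- arXiv:2202.10588 — 5 statements merged into one kernel-verified Lean document; each statement's English description precedes it below -/
import Mathlib

section
/- Let X be a nonnegative random variable whose distribution function F is absolutely continuous with density f, with survival function F̄(x) = 1 − F(x) > 0 for all x ≥ 0, and hazard rate r(x) = f(x)/F̄(x). If r(x) → 0 as x → ∞, then F is heavy-tailed, i.e. E[e^{sX}] = ∞ for every s > 0. -/
open MeasureTheory Filter Set ProbabilityTheory Topology

/-! Once the hazard rate stays below `s / 2`, the tail `1 - F` loses at most half of its value over
any stretch of length `1 / s`, while `exp (s x)` grows by the factor `e > 2` there. Hence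
`exp (s x) * (1 - F x)` is unbounded along `x₀ + n / s`; by Markov's inequality it is a lower bound
for `E[exp (s X)]`. -/

lemma ofReal_one_sub_cdf (ν : Measure ℝ) [IsProbabilityMeasure ν] (x : ℝ) :
    ENNReal.ofReal (1 - cdf ν x) = ν (Ioi x) := by
  rw [← compl_Iic, prob_compl_eq_one_sub measurableSet_Iic, ← ofReal_cdf,
    ENNReal.ofReal_sub _ (cdf_nonneg ν x), ENNReal.ofReal_one]

lemma ofReal_exp_mul_mul_measure_Ioi_le_lintegral (ν : Measure ℝ) {s : ℝ} (hs : 0 ≤ s) (x : ℝ) :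
    ENNReal.ofReal (Real.exp (s * x)) * ν (Ioi x) ≤ ∫⁻ y, ENNReal.ofReal (Real.exp (s * y)) ∂ν := by
  refine le_trans (mul_le_mul_right (measure_mono fun y hy => ?_) _)
    (mul_meas_ge_le_lintegral (by fun_prop) _)
  exact ENNReal.ofReal_le_ofReal (Real.exp_le_exp.2 (mul_le_mul_of_nonneg_left (le_of_lt hy) hs))

lemma lintegral_exp_mul_eq_top_of_tendsto (ν : Measure ℝ) [IsProbabilityMeasure ν] {s : ℝ}
    (hs : 0 ≤ s) {u : ℕ → ℝ}
    (hu : Tendsto (fun n => Real.exp (s * u n) * (1 - cdf ν (u n))) atTop atTop) :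
    ∫⁻ y, ENNReal.ofReal (Real.exp (s * y)) ∂ν = ⊤ := by
  refine top_le_iff.1 (le_of_tendsto' (ENNReal.tendsto_ofReal_atTop.comp hu) fun n => ?_)
  rw [Function.comp_apply, ENNReal.ofReal_mul (Real.exp_nonneg _), ofReal_one_sub_cdf]
  exact ofReal_exp_mul_mul_measure_Ioi_le_lintegral ν hs (u n)

lemma pow_mul_le_of_forall_mul_le_add {g : ℝ → ℝ} {c h x₀ : ℝ} (hh : 0 ≤ h) (hc : 0 ≤ c)
    (hstep : ∀ a, x₀ ≤ a → c * g a ≤ g (a + h)) (n : ℕ) :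
    c ^ n * g x₀ ≤ g (x₀ + n * h) := by
  induction n with
  | zero => simp
  | succ n ih =>
    calc c ^ (n + 1) * g x₀ = c * (c ^ n * g x₀) := by ring
      _ ≤ c * g (x₀ + n * h) := mul_le_mul_of_nonneg_left ih hc
      _ ≤ g (x₀ + n * h + h) := hstep _ (le_add_of_nonneg_right (by positivity))
      _ = g (x₀ + (n + 1 : ℕ) * h) := by push_cast; ring_nf

section

variable {ν : Measure ℝ} {f : ℝ → ℝ}

lemma integrableOn_Iic_of_cdf_eq_integral (hdens : ∀ x, cdf ν x = ∫ u in Iic x, f u) (x : ℝ) :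
    IntegrableOn f (Iic x) := by
  obtain ⟨y, hy, hxy⟩ :=
    (((tendsto_cdf_atTop (μ := ν)).eventually_const_lt one_pos).and (eventually_ge_atTop x)).exists
  refine IntegrableOn.mono_set ?_ (Iic_subset_Iic.2 hxy)
  by_contra hf
  rw [hdens, integral_undef hf] at hy
  exact lt_irrefl 0 hy

lemma cdf_sub_cdf_eq_integral_Ioc (hdens : ∀ x, cdf ν x = ∫ u in Iic x, f u) {a b : ℝ}
    (hab : a ≤ b) : cdf ν b - cdf ν a = ∫ u in Ioc a b, f u := by
  rw [hdens, hdens, ← Iic_union_Ioc_eq_Iic hab, setIntegral_union (Iic_disjoint_Ioc le_rfl)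
    measurableSet_Ioc (integrableOn_Iic_of_cdf_eq_integral hdens a)
    ((integrableOn_Iic_of_cdf_eq_integral hdens b).mono_set Ioc_subset_Iic_self),
    add_sub_cancel_left]

lemma one_sub_mul_le_one_sub_cdf_add (hdens : ∀ x, cdf ν x = ∫ u in Iic x, f u) {ε x₀ h a : ℝ}
    (hε : 0 ≤ ε) (hh : 0 ≤ h) (hrate : ∀ u, x₀ ≤ u → f u ≤ ε * (1 - cdf ν u)) (ha : x₀ ≤ a) :
    (1 - ε * h) * (1 - cdf ν a) ≤ 1 - cdf ν (a + h) := by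
  have hab : a ≤ a + h := le_add_of_nonneg_right hh
  have hint : IntegrableOn f (Ioc a (a + h)) :=
    (integrableOn_Iic_of_cdf_eq_integral hdens _).mono_set Ioc_subset_Iic_self
  have hbound : ∫ u in Ioc a (a + h), f u ≤ ∫ _ in Ioc a (a + h), ε * (1 - cdf ν a) := by
    refine setIntegral_mono_on hint (integrableOn_const measure_Ioc_lt_top.ne) measurableSet_Ioc
      fun u hu => (hrate u (ha.trans hu.1.le)).trans ?_
    exact mul_le_mul_of_nonneg_left (by linarith [monotone_cdf ν hu.1.le]) hε
  rw [setIntegral_const, Real.volume_real_Ioc_of_le hab, smul_eq_mul,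
    ← cdf_sub_cdf_eq_integral_Ioc hdens hab] at hbound
  nlinarith

theorem lintegral_exp_mul_eq_top_of_hazard_rate_tendsto_zero [IsProbabilityMeasure ν]
    (hdens : ∀ x, cdf ν x = ∫ u in Iic x, f u) (hsurv : ∀ᶠ x in atTop, 0 < 1 - cdf ν x)
    (hr : Tendsto (fun x => f x / (1 - cdf ν x)) atTop (𝓝 0)) {s : ℝ} (hs : 0 < s) :
    ∫⁻ y, ENNReal.ofReal (Real.exp (s * y)) ∂ν = ⊤ := by
  obtain ⟨x₀, hx₀⟩ := eventually_atTop.1 (hsurv.and (hr.eventually_lt_const (half_pos hs)))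
  have hrate : ∀ u, x₀ ≤ u → f u ≤ s / 2 * (1 - cdf ν u) := fun u hu =>
    (div_le_iff₀ (hx₀ u hu).1).1 (hx₀ u hu).2.le
  have hhalf : ∀ a, x₀ ≤ a → 1 / 2 * (1 - cdf ν a) ≤ 1 - cdf ν (a + 1 / s) := fun a ha => by
    have h := one_sub_mul_le_one_sub_cdf_add hdens (half_pos hs).le (one_div_pos.2 hs).le hrate ha
    rwa [show 1 - s / 2 * (1 / s) = 1 / 2 by field_simp; ring] at h
  refine lintegral_exp_mul_eq_top_of_tendsto ν hs.le (u := fun n : ℕ => x₀ + n * (1 / s)) ?_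
  have he : 1 < Real.exp 1 / 2 := by linarith [Real.add_one_lt_exp one_ne_zero]
  have hgrowth : Tendsto (fun n : ℕ => Real.exp (s * x₀) * (1 - cdf ν x₀) * (Real.exp 1 / 2) ^ n)
      atTop atTop :=
    (tendsto_pow_atTop_atTop_of_one_lt he).const_mul_atTop
      (mul_pos (Real.exp_pos _) (hx₀ x₀ le_rfl).1)
  refine tendsto_atTop_mono (fun n => ?_) hgrowth
  have hexp : Real.exp (s * (x₀ + n * (1 / s))) = Real.exp (s * x₀) * Real.exp 1 ^ n := by
    rw [← Real.exp_nat_mul, ← Real.exp_add]; field_simp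
  calc Real.exp (s * x₀) * (1 - cdf ν x₀) * (Real.exp 1 / 2) ^ n
      = Real.exp (s * (x₀ + n * (1 / s))) * ((1 / 2) ^ n * (1 - cdf ν x₀)) := by
        rw [hexp]; ring
    _ ≤ _ := mul_le_mul_of_nonneg_left
        (pow_mul_le_of_forall_mul_le_add (one_div_pos.2 hs).le (by norm_num) hhalf n)
        (Real.exp_nonneg _)

end

theorem heavy_tailed_of_hazard_rate_tendsto_zero_general
    {Ω : Type*} [MeasurableSpace Ω] (μ : Measure Ω) [IsProbabilityMeasure μ]
    (X : Ω → ℝ) (hX : Measurable X)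
    (f : ℝ → ℝ)
    (F : ℝ → ℝ) (hF : ∀ x, F x = (μ {ω | X ω ≤ x}).toReal)
    (hdens : ∀ x, F x = ∫ u in Set.Iic x, f u)
    (hsurv : ∀ x : ℝ, 0 ≤ x → 0 < 1 - F x)
    (hr : Tendsto (fun x => f x / (1 - F x)) atTop (nhds 0)) :
    ∀ s : ℝ, 0 < s → ∫⁻ ω, ENNReal.ofReal (Real.exp (s * X ω)) ∂μ = ⊤ := by
  intro s hs
  have := Measure.isProbabilityMeasure_map (μ := μ) hX.aemeasurable
  have hcdf : F = cdf (μ.map X) := funext fun x => by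
    rw [hF, cdf_eq_real, measureReal_def, Measure.map_apply hX measurableSet_Iic]; rfl
  subst hcdf
  rw [← lintegral_map (f := fun y => ENNReal.ofReal (Real.exp (s * y))) (by fun_prop) hX]
  exact lintegral_exp_mul_eq_top_of_hazard_rate_tendsto_zero hdens
    (eventually_atTop.2 ⟨0, hsurv⟩) hr hs

/-- If a nonnegative random variable has an absolutely continuous
distribution with density `f`, positive survival function, and hazard rate
`r(x) = f(x)/(1 - F(x))` tending to `0` at infinity, then `F` is heavy tailed:
`E[exp (s X)] = ∞` for every `s > 0`. -/
theorem heavy_tailed_of_hazard_rate_tendsto_zero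
    {Ω : Type*} [MeasurableSpace Ω] (μ : Measure Ω) [IsProbabilityMeasure μ]
    (X : Ω → ℝ) (hX : Measurable X) (hXnn : ∀ ω, 0 ≤ X ω)
    (f : ℝ → ℝ) (hf_meas : Measurable f) (hf_nn : ∀ x, 0 ≤ f x)
    (F : ℝ → ℝ) (hF : ∀ x, F x = (μ {ω | X ω ≤ x}).toReal)
    (hdens : ∀ x, F x = ∫ u in Set.Iic x, f u)
    (hsurv : ∀ x : ℝ, 0 ≤ x → 0 < 1 - F x)
    (hr : Tendsto (fun x => f x / (1 - F x)) atTop (nhds 0)) :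
    ∀ s : ℝ, 0 < s → ∫⁻ ω, ENNReal.ofReal (Real.exp (s * X ω)) ∂μ = ⊤ :=
  heavy_tailed_of_hazard_rate_tendsto_zero_general μ X hX f F hF hdens hsurv hr
end

section
/- Let X be a real random variable with distribution function F and fix T > 0. Then F is heavy-tailed (E[e^{sX}] = ∞ for every s > 0) if and only if the function x ↦ P(x < X ≤ x + T) = F(x + T) − F(x) is a heavy-tailed function, i.e. limsup_{x→∞} (F(x+T) − F(x)) e^{λx} = ∞ for every λ > 0. -/
open MeasureTheory Filter Set

/-- `F` is heavy tailed (`E[exp (s X)] = ∞` for every `s > 0`) iff,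
for a fixed `T > 0`, the function `x ↦ P(x < X ≤ x + T) = F(x+T) - F(x)` is a
heavy-tailed function, i.e. `limsup_{x→∞} (F(x+T) - F(x)) e^{λ x} = ∞` for every
`λ > 0`. -/
theorem heavy_tailed_iff_interval_prob_heavy_tailed
    {Ω : Type*} [MeasurableSpace Ω] (μ : Measure Ω) [IsProbabilityMeasure μ]
    (X : Ω → ℝ) (hX : Measurable X)
    (F : ℝ → ℝ) (hF : ∀ x, F x = (μ {ω | X ω ≤ x}).toReal)
    (T : ℝ) (hT : 0 < T) :
    (∀ s : ℝ, 0 < s → ∫⁻ ω, ENNReal.ofReal (Real.exp (s * X ω)) ∂μ = ⊤) ↔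
      (∀ lam : ℝ, 0 < lam →
        Filter.limsup (fun x => ENNReal.ofReal ((F (x + T) - F x) * Real.exp (lam * x))) atTop
          = ⊤) := by
  set m : ℝ → ENNReal := fun x => μ {ω | x < X ω ∧ X ω ≤ x + T} with hm
  have hmeasA : ∀ x : ℝ, MeasurableSet {ω | x < X ω ∧ X ω ≤ x + T} := fun x =>
    (measurableSet_lt measurable_const hX).inter (measurableSet_le hX measurable_const)
  have hsub : ∀ x : ℝ, {ω | X ω ≤ x} ⊆ {ω | X ω ≤ x + T} := by
    intro x ω hω
    simp only [mem_setOf_eq] at hω ⊢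
    linarith
  have hdiff : ∀ x : ℝ, {ω | x < X ω ∧ X ω ≤ x + T}
      = {ω | X ω ≤ x + T} \ {ω | X ω ≤ x} := by
    intro x; ext ω
    simp only [mem_setOf_eq, mem_diff, not_le]
    tauto
  have hmne : ∀ x, m x ≠ ⊤ := fun x => (measure_lt_top μ _).ne
  have hmx : ∀ x : ℝ, m x = μ {ω | X ω ≤ x + T} - μ {ω | X ω ≤ x} := by
    intro x
    rw [hm]
    simp only
    rw [hdiff x, measure_diff (hsub x) ((measurableSet_le hX measurable_const).nullMeasurableSet)
      (measure_ne_top μ _)]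
  have hFm : ∀ x : ℝ, F (x + T) - F x = (m x).toReal := by
    intro x
    rw [hF, hF, hmx x, ENNReal.toReal_sub_of_le (measure_mono (hsub x)) (measure_ne_top μ _)]
  have key : ∀ (c x : ℝ), ENNReal.ofReal ((F (x + T) - F x) * Real.exp (c * x))
      = m x * ENNReal.ofReal (Real.exp (c * x)) := by
    intro c x
    rw [hFm, ENNReal.ofReal_mul ENNReal.toReal_nonneg, ENNReal.ofReal_toReal (hmne x)]
  constructor
  · -- heavy tailed → limsup = ⊤
    intro h lam hlam
    by_contra hcon
    have hfun : (fun x => ENNReal.ofReal ((F (x + T) - F x) * Real.exp (lam * x)))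
        = fun x => m x * ENNReal.ofReal (Real.exp (lam * x)) := funext (key lam)
    rw [hfun] at hcon
    set L := Filter.limsup (fun x => m x * ENNReal.ofReal (Real.exp (lam * x))) atTop with hL
    have hLlt : L < ⊤ := lt_top_iff_ne_top.mpr hcon
    have hL1 : L < L + 1 := ENNReal.lt_add_right hLlt.ne one_ne_zero
    have hev : ∀ᶠ x in atTop, m x * ENNReal.ofReal (Real.exp (lam * x)) < L + 1 :=
      Filter.eventually_lt_of_limsup_lt hL1
    rw [eventually_atTop] at hev
    obtain ⟨x₀, hx₀⟩ := hev
    -- bound on m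
    have hmb : ∀ x : ℝ, x₀ ≤ x → m x ≤ (L + 1) * ENNReal.ofReal (Real.exp (-(lam * x))) := by
      intro x hx
      have h1 : m x * ENNReal.ofReal (Real.exp (lam * x)) ≤ L + 1 := (hx₀ x hx).le
      have h2 : ENNReal.ofReal (Real.exp (lam * x)) ≠ 0 := by
        simp [Real.exp_pos]
      have h3 : ENNReal.ofReal (Real.exp (lam * x)) ≠ ⊤ := ENNReal.ofReal_ne_top
      have h4 : m x ≤ (L + 1) / ENNReal.ofReal (Real.exp (lam * x)) :=
        (ENNReal.le_div_iff_mul_le (Or.inl h2) (Or.inl h3)).mpr h1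
      rw [ENNReal.div_eq_inv_mul, mul_comm] at h4
      rwa [Real.exp_neg, ENNReal.ofReal_inv_of_pos (Real.exp_pos _)]
    set s : ℝ := lam / 2 with hs
    have hspos : 0 < s := half_pos hlam
    have hslt : s < lam := half_lt_self hlam
    -- the integrand and its measurability
    have hfm : Measurable fun ω => ENNReal.ofReal (Real.exp (s * X ω)) :=
      ((Real.measurable_exp.comp (hX.const_mul s))).ennreal_ofReal
    -- sets
    set A : ℕ → Set Ω := fun n => {ω | x₀ + n * T < X ω ∧ X ω ≤ (x₀ + n * T) + T} with hA
    have hcover : {ω | X ω ≤ x₀}ᶜ ⊆ ⋃ n : ℕ, A n := by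
      intro ω hω
      simp only [mem_compl_iff, mem_setOf_eq, not_le] at hω
      set y : ℝ := (X ω - x₀) / T with hy
      have hypos : 0 < y := div_pos (sub_pos.mpr hω) hT
      have hXy : X ω - x₀ = y * T := (div_mul_cancel₀ _ hT.ne').symm
      have hceil : 1 ≤ ⌈y⌉₊ := Nat.one_le_ceil_iff.mpr hypos
      refine mem_iUnion.mpr ⟨⌈y⌉₊ - 1, ?_, ?_⟩
      · have hcast : ((⌈y⌉₊ - 1 : ℕ) : ℝ) = (⌈y⌉₊ : ℝ) - 1 := by
          push_cast [Nat.cast_sub hceil]; ring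
        have hlt : (⌈y⌉₊ : ℝ) - 1 < y := by
          have := Nat.ceil_lt_add_one hypos.le
          linarith
        rw [hcast]
        nlinarith
      · have hcast : ((⌈y⌉₊ - 1 : ℕ) : ℝ) = (⌈y⌉₊ : ℝ) - 1 := by
          push_cast [Nat.cast_sub hceil]; ring
        have hle : y ≤ (⌈y⌉₊ : ℝ) := Nat.le_ceil y
        rw [hcast]
        nlinarith
    -- geometric ratio
    set r : ENNReal := ENNReal.ofReal (Real.exp ((s - lam) * T)) with hr
    set K : ENNReal := ENNReal.ofReal (Real.exp ((s - lam) * x₀ + s * T)) with hK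
    have hrlt : r < 1 := by
      rw [hr, ← ENNReal.ofReal_one]
      apply ENNReal.ofReal_lt_ofReal_iff_of_nonneg (Real.exp_pos _).le |>.mpr
      rw [show (1:ℝ) = Real.exp 0 by simp]
      exact Real.exp_lt_exp.mpr (by nlinarith)
    -- per-n bound
    have hAn : ∀ n : ℕ, (∫⁻ ω in A n, ENNReal.ofReal (Real.exp (s * X ω)) ∂μ)
        ≤ (L + 1) * K * r ^ n := by
      intro n
      have hb1 : (∫⁻ ω in A n, ENNReal.ofReal (Real.exp (s * X ω)) ∂μ)
          ≤ ENNReal.ofReal (Real.exp (s * ((x₀ + n * T) + T))) * μ (A n) := by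
        calc (∫⁻ ω in A n, ENNReal.ofReal (Real.exp (s * X ω)) ∂μ)
            ≤ ∫⁻ _ in A n, ENNReal.ofReal (Real.exp (s * ((x₀ + n * T) + T))) ∂μ := by
              apply setLIntegral_mono measurable_const
              intro ω hω
              exact ENNReal.ofReal_le_ofReal (Real.exp_le_exp.mpr
                (mul_le_mul_of_nonneg_left hω.2 hspos.le))
          _ = ENNReal.ofReal (Real.exp (s * ((x₀ + n * T) + T))) * μ (A n) :=
              setLIntegral_const _ _
      have hmu : μ (A n) = m (x₀ + n * T) := rfl
      have hb2 : μ (A n) ≤ (L + 1) * ENNReal.ofReal (Real.exp (-(lam * (x₀ + n * T)))) := by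
        rw [hmu]
        exact hmb _ (le_add_of_nonneg_right (by positivity))
      calc (∫⁻ ω in A n, ENNReal.ofReal (Real.exp (s * X ω)) ∂μ)
          ≤ ENNReal.ofReal (Real.exp (s * ((x₀ + n * T) + T)))
              * ((L + 1) * ENNReal.ofReal (Real.exp (-(lam * (x₀ + n * T))))) :=
            hb1.trans (mul_le_mul_right hb2 _)
        _ = (L + 1) * (ENNReal.ofReal (Real.exp (s * ((x₀ + n * T) + T)))
              * ENNReal.ofReal (Real.exp (-(lam * (x₀ + n * T))))) := by ring
        _ = (L + 1) * ENNReal.ofReal (Real.exp (((s - lam) * x₀ + s * T) + n * ((s - lam) * T))) := by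
            rw [← ENNReal.ofReal_mul (Real.exp_pos _).le, ← Real.exp_add]
            ring_nf
        _ = (L + 1) * (K * r ^ n) := by
            rw [Real.exp_add, Real.exp_nat_mul, ENNReal.ofReal_mul (Real.exp_pos _).le,
              ENNReal.ofReal_pow (Real.exp_pos _).le]
        _ = (L + 1) * K * r ^ n := by ring
    -- assemble finiteness
    have hfin : (∫⁻ ω, ENNReal.ofReal (Real.exp (s * X ω)) ∂μ) ≠ ⊤ := by
      have hsplit : (∫⁻ ω, ENNReal.ofReal (Real.exp (s * X ω)) ∂μ)
          = (∫⁻ ω in {ω | X ω ≤ x₀}, ENNReal.ofReal (Real.exp (s * X ω)) ∂μ)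
            + ∫⁻ ω in {ω | X ω ≤ x₀}ᶜ, ENNReal.ofReal (Real.exp (s * X ω)) ∂μ :=
        (lintegral_add_compl _ (measurableSet_le hX measurable_const)).symm
      have hpart1 : (∫⁻ ω in {ω | X ω ≤ x₀}, ENNReal.ofReal (Real.exp (s * X ω)) ∂μ)
          ≤ ENNReal.ofReal (Real.exp (s * x₀)) := by
        calc (∫⁻ ω in {ω | X ω ≤ x₀}, ENNReal.ofReal (Real.exp (s * X ω)) ∂μ)
            ≤ ∫⁻ _ in {ω | X ω ≤ x₀}, ENNReal.ofReal (Real.exp (s * x₀)) ∂μ := by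
              apply setLIntegral_mono measurable_const
              intro ω hω
              exact ENNReal.ofReal_le_ofReal (Real.exp_le_exp.mpr
                (mul_le_mul_of_nonneg_left hω hspos.le))
          _ = ENNReal.ofReal (Real.exp (s * x₀)) * μ {ω | X ω ≤ x₀} := setLIntegral_const _ _
          _ ≤ ENNReal.ofReal (Real.exp (s * x₀)) * 1 := mul_le_mul_right prob_le_one _
          _ = ENNReal.ofReal (Real.exp (s * x₀)) := mul_one _
      have hpart2 : (∫⁻ ω in {ω | X ω ≤ x₀}ᶜ, ENNReal.ofReal (Real.exp (s * X ω)) ∂μ)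
          ≤ (L + 1) * K * (1 - r)⁻¹ := by
        calc (∫⁻ ω in {ω | X ω ≤ x₀}ᶜ, ENNReal.ofReal (Real.exp (s * X ω)) ∂μ)
            ≤ ∫⁻ ω in ⋃ n : ℕ, A n, ENNReal.ofReal (Real.exp (s * X ω)) ∂μ :=
              lintegral_mono_set hcover
          _ ≤ ∑' n : ℕ, ∫⁻ ω in A n, ENNReal.ofReal (Real.exp (s * X ω)) ∂μ :=
              lintegral_iUnion_le _ _
          _ ≤ ∑' n : ℕ, (L + 1) * K * r ^ n := ENNReal.tsum_le_tsum hAn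
          _ = (L + 1) * K * ∑' n : ℕ, r ^ n := by rw [ENNReal.tsum_mul_left]
          _ = (L + 1) * K * (1 - r)⁻¹ := by rw [ENNReal.tsum_geometric]
      have hne1 : ENNReal.ofReal (Real.exp (s * x₀)) ≠ ⊤ := ENNReal.ofReal_ne_top
      have hne2 : (L + 1) * K * (1 - r)⁻¹ ≠ ⊤ := by
        apply ENNReal.mul_ne_top
        · exact ENNReal.mul_ne_top (ENNReal.add_ne_top.mpr ⟨hLlt.ne, ENNReal.one_ne_top⟩)
            ENNReal.ofReal_ne_top
        · rw [ENNReal.inv_ne_top]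
          intro hz
          rw [tsub_eq_zero_iff_le] at hz
          exact absurd hz (not_le.mpr hrlt)
      rw [hsplit]
      exact ne_top_of_le_ne_top (ENNReal.add_ne_top.mpr ⟨hne1, hne2⟩)
        (add_le_add hpart1 hpart2)
    exact hfin (h s hspos)
  · -- limsup = ⊤ → heavy tailed
    intro h s hs
    have hfun : (fun x => ENNReal.ofReal ((F (x + T) - F x) * Real.exp (s * x)))
        = fun x => m x * ENNReal.ofReal (Real.exp (s * x)) := funext (key s)
    have hbound : ∀ x : ℝ, m x * ENNReal.ofReal (Real.exp (s * x))
        ≤ ∫⁻ ω, ENNReal.ofReal (Real.exp (s * X ω)) ∂μ := by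
      intro x
      have hgm : Measurable fun ω => ENNReal.ofReal (Real.exp (s * X ω)) :=
        ((Real.measurable_exp.comp (hX.const_mul s))).ennreal_ofReal
      calc m x * ENNReal.ofReal (Real.exp (s * x))
          = ∫⁻ _ in {ω | x < X ω ∧ X ω ≤ x + T}, ENNReal.ofReal (Real.exp (s * x)) ∂μ := by
            rw [setLIntegral_const, mul_comm]
        _ ≤ ∫⁻ ω in {ω | x < X ω ∧ X ω ≤ x + T}, ENNReal.ofReal (Real.exp (s * X ω)) ∂μ := by
            apply setLIntegral_mono hgm
            intro ω hω
            exact ENNReal.ofReal_le_ofReal (Real.exp_le_exp.mpr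
              (mul_le_mul_of_nonneg_left hω.1.le hs.le))
        _ ≤ ∫⁻ ω, ENNReal.ofReal (Real.exp (s * X ω)) ∂μ := setLIntegral_le_lintegral _ _
    have htop : (⊤ : ENNReal) ≤ ∫⁻ ω, ENNReal.ofReal (Real.exp (s * X ω)) ∂μ := by
      calc (⊤ : ENNReal)
          = Filter.limsup (fun x => m x * ENNReal.ofReal (Real.exp (s * x))) atTop := by
            rw [← hfun]; exact (h s hs).symm
        _ ≤ ∫⁻ ω, ENNReal.ofReal (Real.exp (s * X ω)) ∂μ :=
            Filter.limsup_le_of_le (by isBoundedDefault)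
              (Filter.Eventually.of_forall hbound)
    exact top_le_iff.mp htop
end

section
/- Let X be a real random variable with distribution function F, tail sum H(x) = 1 − F(x) + F(−x), and let U(t) = E[cos(tX)] denote the real part of the characteristic function of X. Then for every t > 0 the improper integral ∫₀^∞ sin(tx) H(x) dx converges (as the limit of ∫₀^M as M → ∞) and satisfies 1 − U(t) = t ∫₀^∞ sin(tx) H(x) dx. -/
/-!
Pass to the law `ν` of `X`, so that `H(x) = ν(x, ∞) + ν(-∞, -x]`. For fixed `y` and `x > 0`,
`1{y > x} + 1{y ≤ -x}` equals `1{x ≤ |y|}` except at `x = |y|`, so by Fubini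
`t ∫₀^M sin(tx) H(x) dx = ∫ (1 - cos(t min(M, |y|))) dν(y)`. The integrand is bounded by `2`
and equals `1 - cos(ty)` once `M ≥ |y|`, so dominated convergence gives the limit `1 - U(t)`.
-/

open MeasureTheory Filter Set

theorem mul_integral_sin_mul (t c : ℝ) :
    t * ∫ x in (0 : ℝ)..c, Real.sin (t * x) = 1 - Real.cos (t * c) := by
  have hderiv : ∀ x, HasDerivAt (fun x => -Real.cos (t * x)) (t * Real.sin (t * x)) x :=
    fun x => by simpa [mul_comm] using ((hasDerivAt_mul_const t).cos (x := x)).fun_neg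
  rw [← intervalIntegral.integral_const_mul,
    intervalIntegral.integral_eq_sub_of_hasDerivAt (fun x _ => hderiv x)
      (by apply Continuous.intervalIntegrable; fun_prop)]
  simp only [mul_zero, Real.cos_zero, sub_neg_eq_add]
  ring

theorem indicator_Ioi_add_indicator_Iic_neg {x y : ℝ} (hx : 0 < x) (hxy : x ≠ |y|) :
    (Ioi x).indicator (1 : ℝ → ℝ) y + (Iic (-x)).indicator 1 y = (Iic |y|).indicator 1 x := by
  rcases le_or_gt 0 y with hy | hy
  · rw [abs_of_nonneg hy] at hxy ⊢
    have hlt : x < y ↔ x ≤ y := ⟨le_of_lt, fun h => lt_of_le_of_ne h hxy⟩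
    have hneg : ¬ y ≤ -x := by linarith
    simp [indicator_apply, hlt, hneg]
  · rw [abs_of_neg hy] at hxy ⊢
    have hlt : ¬ x < y := by linarith
    simp [indicator_apply, hlt, le_neg]

theorem mul_integral_sin_mul_indicator_tail (t : ℝ) {M : ℝ} (hM : 0 ≤ M) (y : ℝ) :
    t * ∫ x in Ioc 0 M, Real.sin (t * x) * ((Ioi x).indicator 1 y + (Iic (-x)).indicator 1 y)
      = 1 - Real.cos (t * min M |y|) := by
  have hae : (fun x => Real.sin (t * x) * ((Ioi x).indicator 1 y + (Iic (-x)).indicator 1 y))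
      =ᵐ[volume.restrict (Ioc 0 M)] (Iic |y|).indicator fun x => Real.sin (t * x) := by
    filter_upwards [ae_restrict_mem measurableSet_Ioc,
      ae_restrict_of_ae (Measure.ae_ne volume |y|)] with x hx hxy
    rw [indicator_Ioi_add_indicator_Iic_neg hx.1 hxy]
    simp [indicator_apply]
  rw [integral_congr_ae hae, setIntegral_indicator measurableSet_Iic, Ioc_inter_Iic,
    ← intervalIntegral.integral_of_le (le_min hM (abs_nonneg y)), mul_integral_sin_mul]

/-- For a probability measure `ν = law X` this is `1 - F(x) + F(-x)`. -/
noncomputable def tailSum (ν : Measure ℝ) (x : ℝ) : ℝ := ν.real (Ioi x) + ν.real (Iic (-x))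

section FiniteMeasure

variable (ν : Measure ℝ) [IsFiniteMeasure ν]

theorem tailSum_eq_integral (x : ℝ) :
    tailSum ν x = ∫ y, ((Ioi x).indicator 1 y + (Iic (-x)).indicator 1 y) ∂ν := by
  rw [integral_add ((integrable_const 1).indicator measurableSet_Ioi)
    ((integrable_const 1).indicator measurableSet_Iic), integral_indicator_one measurableSet_Ioi,
    integral_indicator_one measurableSet_Iic, tailSum]

theorem mul_integral_sin_mul_tailSum (t : ℝ) {M : ℝ} (hM : 0 ≤ M) :
    t * ∫ x in (0 : ℝ)..M, Real.sin (t * x) * tailSum ν x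
      = ∫ y, (1 - Real.cos (t * min M |y|)) ∂ν := by
  set k : ℝ → ℝ → ℝ := fun x y =>
    Real.sin (t * x) * ((Ioi x).indicator 1 y + (Iic (-x)).indicator 1 y)
  have hk_meas : Measurable (Function.uncurry k) := by
    have hIoi : MeasurableSet {p : ℝ × ℝ | p.2 ∈ Ioi p.1} :=
      measurableSet_lt measurable_fst measurable_snd
    have hIic : MeasurableSet {p : ℝ × ℝ | p.2 ∈ Iic (-p.1)} :=
      measurableSet_le measurable_snd measurable_fst.neg
    simp only [Function.uncurry_def, k, indicator_apply, Pi.one_apply]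
    exact (by fun_prop : Measurable fun p : ℝ × ℝ => Real.sin (t * p.1)).mul
      ((measurable_const.ite hIoi measurable_const).add
        (measurable_const.ite hIic measurable_const))
  have hk_int : Integrable (Function.uncurry k) ((volume.restrict (Ioc 0 M)).prod ν) := by
    refine Integrable.of_bound hk_meas.aestronglyMeasurable 2 (ae_of_all _ fun p => ?_)
    have hind :
        |(Ioi p.1).indicator 1 p.2 + (Iic (-p.1)).indicator (1 : ℝ → ℝ) p.2| ≤ 2 := by
      simp only [indicator_apply, Pi.one_apply]
      split_ifs <;> norm_num
    rw [Function.uncurry_def, Real.norm_eq_abs, abs_mul]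
    nlinarith [Real.abs_sin_le_one (t * p.1), abs_nonneg (Real.sin (t * p.1))]
  calc t * ∫ x in (0 : ℝ)..M, Real.sin (t * x) * tailSum ν x
      = t * ∫ x in Ioc 0 M, ∫ y, k x y ∂ν := by
        simp only [intervalIntegral.integral_of_le hM, k, tailSum_eq_integral,
          ← integral_const_mul]
    _ = ∫ y, t * (∫ x in Ioc 0 M, k x y) ∂ν := by
        rw [integral_integral_swap hk_int, integral_const_mul]
    _ = ∫ y, (1 - Real.cos (t * min M |y|)) ∂ν :=
        integral_congr_ae (ae_of_all _ (mul_integral_sin_mul_indicator_tail t hM))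

theorem tendsto_integral_one_sub_cos_mul_min (t : ℝ) :
    Tendsto (fun M => ∫ y, (1 - Real.cos (t * min M |y|)) ∂ν) atTop
      (nhds (ν.real univ - ∫ y, Real.cos (t * y) ∂ν)) := by
  have hcos_int : Integrable (fun y => Real.cos (t * y)) ν :=
    Integrable.of_bound (by fun_prop) 1 (ae_of_all _ fun y => Real.abs_cos_le_one _)
  have hlimit :
      ∫ y, (1 - Real.cos (t * |y|)) ∂ν = ν.real univ - ∫ y, Real.cos (t * y) ∂ν := by
    have hcos_abs : ∀ y, Real.cos (t * |y|) = Real.cos (t * y) := fun y => by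
      rcases abs_choice y with h | h <;> simp [h]
    simp only [hcos_abs]
    rw [integral_sub (integrable_const 1) hcos_int, integral_const, smul_eq_mul, mul_one]
  rw [← hlimit]
  refine tendsto_integral_filter_of_dominated_convergence (fun _ => 2)
    (Eventually.of_forall fun M => by fun_prop) (Eventually.of_forall fun M => ?_)
    (integrable_const 2) (ae_of_all _ fun y => ?_)
  · refine ae_of_all _ fun y => ?_
    rw [Real.norm_eq_abs, abs_le]
    constructor <;>
      linarith [Real.neg_one_le_cos (t * min M |y|), Real.cos_le_one (t * min M |y|)]
  · refine tendsto_const_nhds.congr' ?_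
    filter_upwards [eventually_ge_atTop |y|] with M hM
    rw [min_eq_right hM]

theorem tendsto_integral_sin_mul_tailSum {t : ℝ} (ht : t ≠ 0) :
    Tendsto (fun M => ∫ x in (0 : ℝ)..M, Real.sin (t * x) * tailSum ν x) atTop
      (nhds ((ν.real univ - ∫ y, Real.cos (t * y) ∂ν) / t)) := by
  refine ((tendsto_integral_one_sub_cos_mul_min ν t).div_const t).congr' ?_
  filter_upwards [eventually_ge_atTop 0] with M hM
  rw [← mul_integral_sin_mul_tailSum ν t hM, mul_div_cancel_left₀ _ ht]

end FiniteMeasure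

/-- For a real random variable `X` with distribution function `F`,
tail sum `H(x) = 1 - F(x) + F(-x)` and `U(t) = E[cos (t X)]`, for every `t > 0` the
improper integral `∫₀^∞ sin(tx) H(x) dx` converges (as a limit of `∫₀^M` as `M → ∞`)
and `1 - U(t) = t ∫₀^∞ sin(tx) H(x) dx`. -/
theorem one_sub_real_charFun_eq_integral_tail_sum
    {Ω : Type*} [MeasurableSpace Ω] (μ : Measure Ω) [IsProbabilityMeasure μ]
    (X : Ω → ℝ) (hX : Measurable X)
    (F : ℝ → ℝ) (hF : ∀ x, F x = (μ {ω | X ω ≤ x}).toReal)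
    (H : ℝ → ℝ) (hH : ∀ x, H x = 1 - F x + F (-x))
    (U : ℝ → ℝ) (hU : ∀ t, U t = ∫ ω, Real.cos (t * X ω) ∂μ) :
    ∀ t : ℝ, 0 < t → ∃ I : ℝ,
      Tendsto (fun M : ℝ => ∫ x in (0 : ℝ)..M, Real.sin (t * x) * H x) atTop (nhds I) ∧
      1 - U t = t * I := by
  intro t ht
  set ν := μ.map X
  have : IsProbabilityMeasure ν := Measure.isProbabilityMeasure_map hX.aemeasurable
  have hF_law : ∀ x, F x = ν.real (Iic x) := fun x => by
    rw [hF, measureReal_def, Measure.map_apply hX measurableSet_Iic]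
    rfl
  have hH_law : H = tailSum ν := funext fun x => by
    rw [hH, hF_law, hF_law, tailSum, ← compl_Iic, probReal_compl_eq_one_sub measurableSet_Iic]
  have hU_law : U t = ∫ y, Real.cos (t * y) ∂ν := by
    rw [hU, integral_map hX.aemeasurable (by fun_prop)]
  refine ⟨(1 - U t) / t, ?_, by field_simp⟩
  rw [hH_law, hU_law, ← probReal_univ (μ := ν)]
  exact tendsto_integral_sin_mul_tailSum ν ht.ne'
end

section
/- Let ξ > 0 and let X₁, …, X_n be independent and identically distributed random variables with the Pareto distribution P(X_i > x) = x^{−1/ξ} for x ≥ 1. Denote by X^{(1,n)} ≥ X^{(2,n)} ≥ … ≥ X^{(n,n)} the decreasing order statistics of the sample. For integers 0 ≤ k₀ < k < n − 1, define the optimally weighted trimmed Hill estimator ξ̂^{trim}_{k₀,k,n} = ((k₀+1)/(k−k₀)) · ln( X^{(k₀+1,n)} / X^{(k+1,n)} ) + (1/(k−k₀)) · Σ_{i=k₀+2}^{k} ln( X^{(i,n)} / X^{(k+1,n)} ). Then ξ̂^{trim}_{k₀,k,n} is an unbiased estimator of ξ: E[ ξ̂^{trim}_{k₀,k,n} ]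 = ξ. -/
/-!
Since `P(log Xᵢ > t) = q := exp (-t / ξ)` for `t ≥ 0`, the event `log X^{(j+1,n)} > t` says
that at least `j + 1` of `n` independent events of probability `q` occur, a binomial tail.
Integrating it over `t > 0` with `∫ q ^ c (1 - q) ^ (n - c) dt = ξ / (c * n.choose c)` (a Beta
integral, by recursion on `n - c`) gives `E log X^{(j+1,n)} = ξ (H n - H j)` with harmonic
numbers `H`. The estimator is a linear combination of differences of these moments, and the
weights `k₀ + 1` and `1` make the harmonic numbers telescope to `k - k₀`.
-/

open MeasureTheory Filter Set ProbabilityTheory Finset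
open scoped ENNReal

theorem Antitone.lt_apply_iff_le_card {α : Type*} [LinearOrder α] {n : ℕ} {y : Fin n → α}
    (hy : Antitone y) (t : α) (j : Fin n) : t < y j ↔ (j : ℕ) + 1 ≤ #{i | t < y i} := by
  constructor
  · intro h
    calc (j : ℕ) + 1 = #(Iic j) := (Fin.card_Iic j).symm
      _ ≤ #{i | t < y i} := card_le_card fun i hi ↦
          mem_filter.2 ⟨mem_univ i, h.trans_le (hy (mem_Iic.1 hi))⟩
  · intro h
    by_contra! hle
    have hsub : ({i | t < y i} : Finset (Fin n)) ⊆ Iio j := fun i hi ↦ by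
      by_contra! hji
      exact (mem_filter.1 hi).2.not_ge ((hy (not_lt.1 (mem_Iio.not.1 hji))).trans hle)
    have := Finset.card_le_card hsub
    rw [Fin.card_Iio] at this
    omega

theorem lt_apply_iff_le_card_of_perm {α : Type*} [LinearOrder α] {n : ℕ} {x y : Fin n → α}
    (hy : Antitone y) (σ : Equiv.Perm (Fin n)) (hσ : ∀ i, y i = x (σ i)) (t : α) (j : Fin n) :
    t < y j ↔ (j : ℕ) + 1 ≤ #{i | t < x i} := by
  rw [hy.lt_apply_iff_le_card, card_equiv (t := {i | t < x i}) σ fun i ↦ by simp [hσ]]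

section Exceedances

variable {Ω ι : Type*} [Fintype ι] {X : ι → Ω → ℝ}

theorem setOf_filter_lt_eq_iInter [DecidableEq ι] (y : ℝ) (s : Finset ι) :
    {ω | ({i | y < X i ω} : Finset ι) = s}
      = ⋂ i, if i ∈ s then {ω | y < X i ω} else {ω | y < X i ω}ᶜ := by
  ext ω
  simp only [Set.mem_ofPred_eq, Set.mem_iInter, Finset.ext_iff, mem_filter]
  refine forall_congr' fun i ↦ ?_
  by_cases hi : i ∈ s <;> simp [hi]

variable [MeasurableSpace Ω]

theorem measurable_card_filter_lt (hXm : ∀ i, Measurable (X i)) (y : ℝ) :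
    Measurable fun ω ↦ #{i | y < X i ω} := by
  simp_rw [card_filter]
  exact Finset.measurable_sum _ fun i _ ↦
    Measurable.ite (measurableSet_lt measurable_const (hXm i)) measurable_const measurable_const

theorem measurableSet_filter_lt_eq (hXm : ∀ i, Measurable (X i)) (y : ℝ) (s : Finset ι) :
    MeasurableSet {ω | ({i | y < X i ω} : Finset ι) = s} := by
  classical
  rw [setOf_filter_lt_eq_iInter]
  refine MeasurableSet.iInter fun i ↦ ?_
  split_ifs
  · exact measurableSet_lt measurable_const (hXm i)
  · exact (measurableSet_lt measurable_const (hXm i)).compl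

variable {μ : Measure Ω} [IsProbabilityMeasure μ]

theorem ProbabilityTheory.iIndepFun.measure_filter_lt_eq (hindep : iIndepFun X μ)
    (hXm : ∀ i, Measurable (X i)) {y : ℝ} {p : ℝ≥0∞}
    (hp : ∀ i, μ {ω | y < X i ω} = p) (s : Finset ι) :
    μ {ω | ({i | y < X i ω} : Finset ι) = s} = p ^ #s * (1 - p) ^ (Fintype.card ι - #s) := by
  classical
  have hfactor (i : ι) : μ (if i ∈ s then {ω | y < X i ω} else {ω | y < X i ω}ᶜ)
      = if i ∈ s then p else 1 - p := by
    split_ifs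
    · exact hp i
    · rw [prob_compl_eq_one_sub (measurableSet_lt measurable_const (hXm i)), hp i]
  rw [setOf_filter_lt_eq_iInter, hindep.meas_iInter fun i ↦ ?_]
  · simp_rw [hfactor]
    rw [prod_ite, prod_const, prod_const]
    simp [filter_notMem_eq_sdiff, card_univ_sdiff]
  · split_ifs
    · exact ⟨Ioi y, measurableSet_Ioi, rfl⟩
    · exact ⟨Iic y, measurableSet_Iic, by ext; simp⟩

theorem ProbabilityTheory.iIndepFun.measure_card_filter_lt_eq (hindep : iIndepFun X μ)
    (hXm : ∀ i, Measurable (X i)) {y : ℝ} {p : ℝ≥0∞}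
    (hp : ∀ i, μ {ω | y < X i ω} = p) (c : ℕ) :
    μ {ω | #{i | y < X i ω} = c}
      = (Fintype.card ι).choose c * p ^ c * (1 - p) ^ (Fintype.card ι - c) := by
  have hset : {ω | #{i | y < X i ω} = c}
      = ⋃ s ∈ powersetCard c (univ : Finset ι), {ω | ({i | y < X i ω} : Finset ι) = s} := by
    ext ω
    simp
  rw [hset, measure_biUnion_finset (fun a _ b _ hab ↦ ?_) fun s _ ↦ ?_]
  · rw [sum_congr rfl fun s hs ↦ by
      rw [hindep.measure_filter_lt_eq hXm hp, (mem_powersetCard_univ.1 hs)]]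
    simp [mul_assoc]
  · exact Set.disjoint_left.2 fun ω ha hb ↦ hab (ha.symm.trans hb)
  · exact measurableSet_filter_lt_eq hXm y s

theorem ProbabilityTheory.iIndepFun.measure_le_card_filter_lt (hindep : iIndepFun X μ)
    (hXm : ∀ i, Measurable (X i)) {y : ℝ} {p : ℝ≥0∞}
    (hp : ∀ i, μ {ω | y < X i ω} = p) (m : ℕ) :
    μ {ω | m ≤ #{i | y < X i ω}} = ∑ c ∈ Finset.Icc m (Fintype.card ι),
      (Fintype.card ι).choose c * p ^ c * (1 - p) ^ (Fintype.card ι - c) := by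
  have hset : {ω | m ≤ #{i | y < X i ω}}
      = ⋃ c ∈ Finset.Icc m (Fintype.card ι), {ω | #{i | y < X i ω} = c} := by
    ext ω
    simp [card_le_univ]
  rw [hset, measure_biUnion_finset (fun a _ b _ hab ↦ ?_)
    fun c _ ↦ by exact measurable_card_filter_lt hXm y (measurableSet_singleton c)]
  · exact sum_congr rfl fun c _ ↦ hindep.measure_card_filter_lt_eq hXm hp c
  · exact Set.disjoint_left.2 fun ω ha hb ↦ hab (ha.symm.trans hb)

end Exceedances

section ExpIntegral

variable {ξ : ℝ}

theorem exp_neg_div_le_one {t : ℝ} (hξ : 0 ≤ ξ) (ht : 0 ≤ t) : Real.exp (-t / ξ) ≤ 1 :=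
  Real.exp_le_one_iff.2 (div_nonpos_of_nonpos_of_nonneg (neg_nonpos.2 ht) hξ)

theorem integrableOn_exp_neg_div_pow_mul_one_sub_pow (hξ : 0 < ξ) {c : ℕ} (hc : 0 < c)
    (K : ℕ) :
    IntegrableOn (fun t ↦ Real.exp (-t / ξ) ^ c * (1 - Real.exp (-t / ξ)) ^ K) (Ioi 0) := by
  have hdom : IntegrableOn (fun t ↦ Real.exp (-(c / ξ) * t)) (Ioi 0) :=
    integrableOn_exp_mul_Ioi (by simp; positivity) 0
  refine hdom.mono' (by fun_prop) (ae_restrict_of_forall_mem measurableSet_Ioi fun t ht ↦ ?_)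
  have hq := exp_neg_div_le_one hξ.le (le_of_lt ht)
  rw [norm_mul, norm_pow, norm_pow, Real.norm_of_nonneg (Real.exp_pos _).le,
    Real.norm_of_nonneg (sub_nonneg.2 hq), ← Real.exp_nat_mul]
  calc Real.exp (c * (-t / ξ)) * (1 - Real.exp (-t / ξ)) ^ K
      ≤ Real.exp (c * (-t / ξ)) * 1 := by
        gcongr
        exact pow_le_one₀ (sub_nonneg.2 hq) (sub_le_self _ (Real.exp_pos _).le)
    _ = Real.exp (-(c / ξ) * t) := by ring_nf

theorem integral_exp_neg_div_pow_mul_one_sub_pow (hξ : 0 < ξ) {c : ℕ} (hc : 0 < c) (K : ℕ) :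
    ∫ t in Ioi 0, Real.exp (-t / ξ) ^ c * (1 - Real.exp (-t / ξ)) ^ K
      = ξ / (c * (c + K).choose c) := by
  induction K generalizing c with
  | zero =>
    simp_rw [pow_zero, mul_one, ← Real.exp_nat_mul, Nat.add_zero, Nat.choose_self]
    rw [show (fun t : ℝ ↦ Real.exp (c * (-t / ξ))) = fun t ↦ Real.exp (-(c / ξ) * t) by
      ext t; ring_nf, integral_exp_mul_Ioi (by simp; positivity)]
    field_simp
    simp
  | succ K ih =>
    have hsplit (t : ℝ) : Real.exp (-t / ξ) ^ c * (1 - Real.exp (-t / ξ)) ^ (K + 1)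
        = Real.exp (-t / ξ) ^ c * (1 - Real.exp (-t / ξ)) ^ K
          - Real.exp (-t / ξ) ^ (c + 1) * (1 - Real.exp (-t / ξ)) ^ K := by ring
    simp_rw [hsplit]
    rw [integral_sub (integrableOn_exp_neg_div_pow_mul_one_sub_pow hξ hc K)
      (integrableOn_exp_neg_div_pow_mul_one_sub_pow hξ c.succ_pos K), ih hc, ih c.succ_pos,
      show c + 1 + K = c + K + 1 by ring, show c + (K + 1) = c + K + 1 by ring]
    have h1 : ((c + K + 1 : ℕ) : ℝ) * (c + K).choose c
        = (c + K + 1).choose (c + 1) * (c + 1 : ℕ) := by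
      exact_mod_cast Nat.add_one_mul_choose_eq (c + K) c
    have h2 : ((c + K).choose c : ℝ) * (c + K + 1 : ℕ)
        = (c + K + 1).choose c * (K + 1 : ℕ) := by
      rw [← Nat.add_sub_cancel_left (n := c) (m := K + 1)]
      exact_mod_cast Nat.choose_mul_succ_eq (c + K) c
    have hc' : (0 : ℝ) < c := by exact_mod_cast hc
    have hA : (0 : ℝ) < (c + K).choose c := by exact_mod_cast Nat.choose_pos (by omega)
    have hB : (0 : ℝ) < (c + K + 1).choose (c + 1) := by exact_mod_cast Nat.choose_pos (by omega)
    have hD : (0 : ℝ) < (c + K + 1).choose c := by exact_mod_cast Nat.choose_pos (by omega)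
    push_cast at h1 h2 ⊢
    rw [div_sub_div _ _ (by positivity) (by positivity),
      div_eq_div_iff (by positivity) (by positivity)]
    linear_combination ξ * c * (-(((c + K + 1).choose c : ℝ) - (c + K).choose c) * h1
      - (c + K).choose c * h2)

theorem lintegral_choose_mul_exp_neg_div_pow (hξ : 0 < ξ) {n c : ℕ} (hc : 0 < c)
    (hcn : c ≤ n) :
    ∫⁻ t in Ioi 0, ENNReal.ofReal
        (n.choose c * (Real.exp (-t / ξ) ^ c * (1 - Real.exp (-t / ξ)) ^ (n - c)))
      = ENNReal.ofReal (ξ / c) := by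
  have hnonneg : 0 ≤ᵐ[volume.restrict (Ioi 0)] fun t : ℝ ↦
      n.choose c * (Real.exp (-t / ξ) ^ c * (1 - Real.exp (-t / ξ)) ^ (n - c)) :=
    ae_restrict_of_forall_mem measurableSet_Ioi fun t ht ↦ by
      have := sub_nonneg.2 (exp_neg_div_le_one hξ.le (le_of_lt ht))
      positivity
  rw [← ofReal_integral_eq_lintegral_ofReal
    ((integrableOn_exp_neg_div_pow_mul_one_sub_pow hξ hc _).const_mul _) hnonneg,
    integral_const_mul, integral_exp_neg_div_pow_mul_one_sub_pow hξ hc,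
    Nat.add_sub_cancel' hcn]
  have : (0 : ℝ) < n.choose c := by exact_mod_cast Nat.choose_pos hcn
  congr 1
  field_simp

end ExpIntegral

theorem add_one_mul_harmonic_sub_add_sum_Ico_harmonic_sub {k₀ k : ℕ} (hk : k₀ < k) :
    ((k₀ : ℚ) + 1) * (harmonic k - harmonic k₀)
      + ∑ i ∈ Ico (k₀ + 1) k, (harmonic k - harmonic i) = k - k₀ := by
  induction k, hk using Nat.le_induction with
  | base =>
    rw [harmonic_succ, Ico_self, sum_empty, add_zero, Nat.cast_add_one, add_sub_cancel_left,
      mul_inv_cancel₀ (by positivity)]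
    ring
  | succ k hk ih =>
    rw [sum_Ico_succ_top hk, harmonic_succ]
    simp_rw [add_sub_right_comm _ _ (harmonic _)]
    rw [sum_add_distrib, sum_const, Nat.card_Ico, nsmul_eq_mul,
      Nat.cast_sub hk]
    push_cast
    field_simp
    linear_combination ((k : ℚ) + 1) * ih

theorem harmonic_sub_harmonic {j n : ℕ} (h : j ≤ n) :
    harmonic n - harmonic j = ∑ c ∈ Ioc j n, (c : ℚ)⁻¹ := by
  have hIcc (m : ℕ) : Finset.Icc 1 m = Finset.Ioc 0 m := Finset.Icc_add_one_left_eq_Ioc 0 m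
  rw [harmonic_eq_sum_Icc, harmonic_eq_sum_Icc, hIcc, hIcc,
    ← sum_Ioc_consecutive _ (Nat.zero_le j) h, add_sub_cancel_left]

section ParetoOrderStatistics

variable {Ω : Type*} [MeasurableSpace Ω] {μ : Measure Ω}

theorem integral_log_div {f g : Ω → ℝ} (hf : ∀ᵐ ω ∂μ, 0 < f ω) (hg : ∀ᵐ ω ∂μ, 0 < g ω)
    (hlf : Integrable (fun ω ↦ Real.log (f ω)) μ)
    (hlg : Integrable (fun ω ↦ Real.log (g ω)) μ) :
    Integrable (fun ω ↦ Real.log (f ω / g ω)) μ ∧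
      ∫ ω, Real.log (f ω / g ω) ∂μ = ∫ ω, Real.log (f ω) ∂μ - ∫ ω, Real.log (g ω) ∂μ := by
  have hlog_div : (fun ω ↦ Real.log (f ω / g ω))
      =ᵐ[μ] fun ω ↦ Real.log (f ω) - Real.log (g ω) := by
    filter_upwards [hf, hg] with ω hfω hgω using Real.log_div hfω.ne' hgω.ne'
  exact ⟨(hlf.sub hlg).congr hlog_div.symm,
    by rw [integral_congr_ae hlog_div, integral_sub hlf hlg]⟩

variable [IsProbabilityMeasure μ]

theorem ae_le_of_forall_lt_measure_eq_one {f : Ω → ℝ} (hf : Measurable f) {a : ℝ}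
    (h : ∀ x < a, μ {ω | x < f ω} = 1) : ∀ᵐ ω ∂μ, a ≤ f ω := by
  have hlt : ∀ᵐ ω ∂μ, ∀ m : ℕ, a - 1 / (m + 1) < f ω := ae_all_iff.2 fun m ↦
    (ae_iff_measure_eq (measurableSet_lt measurable_const hf).nullMeasurableSet).2 <| by
      rw [h _ (sub_lt_self a (by positivity)), measure_univ]
  filter_upwards [hlt] with ω hω
  refine le_of_forall_pos_lt_add fun ε hε ↦ ?_
  obtain ⟨m, hm⟩ := exists_nat_one_div_lt hε
  linarith [hω m]

variable {n : ℕ} {X Y : Fin n → Ω → ℝ}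

theorem measurable_of_antitone_perm (hXm : ∀ i, Measurable (X i))
    (hperm : ∀ ω, ∃ σ : Equiv.Perm (Fin n), ∀ i, Y i ω = X (σ i) ω)
    (hsorted : ∀ ω, ∀ i j : Fin n, i ≤ j → Y j ω ≤ Y i ω) (j : Fin n) :
    Measurable (Y j) := by
  refine measurable_of_Ioi fun t ↦ ?_
  have hset : Y j ⁻¹' Ioi t = {ω | (j : ℕ) + 1 ≤ #{i | t < X i ω}} := by
    ext ω
    obtain ⟨σ, hσ⟩ := hperm ω
    exact lt_apply_iff_le_card_of_perm (hsorted ω) σ hσ t j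
  rw [hset]
  exact measurableSet_le measurable_const (measurable_card_filter_lt hXm t)

variable {ξ : ℝ}

theorem measure_exp_lt_orderStat (hξ : 0 < ξ) (hXm : ∀ i, Measurable (X i))
    (hindep : iIndepFun X μ)
    (hpareto : ∀ i, ∀ x : ℝ, 1 ≤ x →
      μ {ω | x < X i ω} = ENNReal.ofReal (x ^ (-1 / ξ)))
    (hperm : ∀ ω, ∃ σ : Equiv.Perm (Fin n), ∀ i, Y i ω = X (σ i) ω)
    (hsorted : ∀ ω, ∀ i j : Fin n, i ≤ j → Y j ω ≤ Y i ω) (j : Fin n) {t : ℝ}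
    (ht : 0 ≤ t) :
    μ {ω | Real.exp t < Y j ω} = ∑ c ∈ Ioc (j : ℕ) n, ENNReal.ofReal
      (n.choose c * (Real.exp (-t / ξ) ^ c * (1 - Real.exp (-t / ξ)) ^ (n - c))) := by
  have hset : {ω | Real.exp t < Y j ω} = {ω | (j : ℕ) + 1 ≤ #{i | Real.exp t < X i ω}} := by
    ext ω
    obtain ⟨σ, hσ⟩ := hperm ω
    exact lt_apply_iff_le_card_of_perm (hsorted ω) σ hσ _ j
  have htail (i : Fin n) : μ {ω | Real.exp t < X i ω} = ENNReal.ofReal (Real.exp (-t / ξ)) := by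
    rw [hpareto i _ (Real.one_le_exp ht), ← Real.exp_mul]
    ring_nf
  have hq := exp_neg_div_le_one hξ.le ht
  rw [hset, hindep.measure_le_card_filter_lt hXm htail, Fintype.card_fin,
    Finset.Icc_add_one_left_eq_Ioc]
  refine sum_congr rfl fun c _ ↦ ?_
  rw [ENNReal.ofReal_mul (by positivity), ENNReal.ofReal_mul (by positivity),
    ENNReal.ofReal_pow (by positivity), ENNReal.ofReal_pow (sub_nonneg.2 hq),
    ENNReal.ofReal_sub _ (by positivity), ENNReal.ofReal_one, ENNReal.ofReal_natCast, mul_assoc]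

theorem ae_one_le_orderStat (hXm : ∀ i, Measurable (X i))
    (hpareto1 : ∀ i, ∀ x : ℝ, x < 1 → μ {ω | x < X i ω} = 1)
    (hperm : ∀ ω, ∃ σ : Equiv.Perm (Fin n), ∀ i, Y i ω = X (σ i) ω) :
    ∀ᵐ ω ∂μ, ∀ j, 1 ≤ Y j ω := by
  have hX : ∀ᵐ ω ∂μ, ∀ i, 1 ≤ X i ω :=
    ae_all_iff.2 fun i ↦ ae_le_of_forall_lt_measure_eq_one (hXm i) (hpareto1 i)
  filter_upwards [hX] with ω hω j
  obtain ⟨σ, hσ⟩ := hperm ω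
  exact (hσ j).symm ▸ hω (σ j)

theorem lintegral_log_orderStat (hξ : 0 < ξ) (hXm : ∀ i, Measurable (X i))
    (hindep : iIndepFun X μ)
    (hpareto : ∀ i, ∀ x : ℝ, 1 ≤ x →
      μ {ω | x < X i ω} = ENNReal.ofReal (x ^ (-1 / ξ)))
    (hpareto1 : ∀ i, ∀ x : ℝ, x < 1 → μ {ω | x < X i ω} = 1)
    (hperm : ∀ ω, ∃ σ : Equiv.Perm (Fin n), ∀ i, Y i ω = X (σ i) ω)
    (hsorted : ∀ ω, ∀ i j : Fin n, i ≤ j → Y j ω ≤ Y i ω) (j : Fin n) :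
    ∫⁻ ω, ENNReal.ofReal (Real.log (Y j ω)) ∂μ
      = ENNReal.ofReal (ξ * ∑ c ∈ Ioc (j : ℕ) n, (c : ℝ)⁻¹) := by
  have hone := ae_one_le_orderStat hXm hpareto1 hperm
  have hlog_nonneg : 0 ≤ᵐ[μ] fun ω ↦ Real.log (Y j ω) := by
    filter_upwards [hone] with ω hω using Real.log_nonneg (hω j)
  have htail (t : ℝ) (ht : t ∈ Set.Ioi 0) : μ {ω | t < Real.log (Y j ω)}
      = ∑ c ∈ Ioc (j : ℕ) n, ENNReal.ofReal
        (n.choose c * (Real.exp (-t / ξ) ^ c * (1 - Real.exp (-t / ξ)) ^ (n - c))) := by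
    rw [← measure_exp_lt_orderStat hξ hXm hindep hpareto hperm hsorted j (le_of_lt ht)]
    refine measure_congr ?_
    filter_upwards [hone] with ω hω
    exact propext (Real.lt_log_iff_exp_lt (by linarith [hω j]))
  rw [lintegral_eq_lintegral_meas_lt μ hlog_nonneg
      (Real.measurable_log.comp (measurable_of_antitone_perm hXm hperm hsorted j)).aemeasurable,
    setLIntegral_congr_fun measurableSet_Ioi htail, lintegral_finsetSum _ fun c _ ↦ by fun_prop,
    sum_congr rfl fun c hc ↦ lintegral_choose_mul_exp_neg_div_pow hξ (by
      have := (mem_Ioc.1 hc).1; omega) (mem_Ioc.1 hc).2,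
    ← ENNReal.ofReal_sum_of_nonneg fun c _ ↦ by positivity, mul_sum]
  rfl

theorem integral_log_orderStat (hξ : 0 < ξ) (hXm : ∀ i, Measurable (X i))
    (hindep : iIndepFun X μ)
    (hpareto : ∀ i, ∀ x : ℝ, 1 ≤ x →
      μ {ω | x < X i ω} = ENNReal.ofReal (x ^ (-1 / ξ)))
    (hpareto1 : ∀ i, ∀ x : ℝ, x < 1 → μ {ω | x < X i ω} = 1)
    (hperm : ∀ ω, ∃ σ : Equiv.Perm (Fin n), ∀ i, Y i ω = X (σ i) ω)
    (hsorted : ∀ ω, ∀ i j : Fin n, i ≤ j → Y j ω ≤ Y i ω) (j : Fin n) :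
    Integrable (fun ω ↦ Real.log (Y j ω)) μ
      ∧ ∫ ω, Real.log (Y j ω) ∂μ = ξ * (harmonic n - harmonic j : ℚ) := by
  have hlog_nonneg : 0 ≤ᵐ[μ] fun ω ↦ Real.log (Y j ω) := by
    filter_upwards [ae_one_le_orderStat hXm hpareto1 hperm] with ω hω
      using Real.log_nonneg (hω j)
  have hmeas : AEStronglyMeasurable (fun ω ↦ Real.log (Y j ω)) μ :=
    (Real.measurable_log.comp
      (measurable_of_antitone_perm hXm hperm hsorted j)).aestronglyMeasurable
  have hlint := lintegral_log_orderStat hξ hXm hindep hpareto hpareto1 hperm hsorted j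
  refine ⟨⟨hmeas,
    (hasFiniteIntegral_iff_ofReal hlog_nonneg).2 (hlint ▸ ENNReal.ofReal_lt_top)⟩, ?_⟩
  rw [integral_eq_lintegral_of_nonneg_ae hlog_nonneg hmeas, hlint,
    ENNReal.toReal_ofReal (by positivity), harmonic_sub_harmonic j.is_lt.le]
  push_cast
  rfl

end ParetoOrderStatistics

/-- For an i.i.d. sample `X₁, …, Xₙ` from a Pareto distribution with
`P(Xᵢ > x) = x^{-1/ξ}` for `x ≥ 1` and decreasing order statistics
`Y 0 ≥ Y 1 ≥ … ≥ Y (n-1)` (so `X^{(j,n)} = Y (j-1)`), the optimally weighted trimmed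
Hill estimator
`ξ̂ = ((k₀+1)/(k-k₀)) ln(X^{(k₀+1,n)}/X^{(k+1,n)}) + (1/(k-k₀)) Σ_{i=k₀+2}^{k} ln(X^{(i,n)}/X^{(k+1,n)})`
is unbiased for `ξ`, for all `0 ≤ k₀ < k < n-1`. -/
theorem trimmed_hill_estimator_unbiased
    {Ω : Type*} [MeasurableSpace Ω] (μ : Measure Ω) [IsProbabilityMeasure μ]
    (ξ : ℝ) (hξ : 0 < ξ) (n : ℕ)
    (X : Fin n → Ω → ℝ) (hXm : ∀ i, Measurable (X i))
    (hindep : iIndepFun X μ)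
    (hpareto : ∀ i, ∀ x : ℝ, 1 ≤ x → μ {ω | x < X i ω} = ENNReal.ofReal (x ^ (-1 / ξ)))
    (hpareto1 : ∀ i, ∀ x : ℝ, x < 1 → μ {ω | x < X i ω} = 1)
    (Y : Fin n → Ω → ℝ)
    (hperm : ∀ ω, ∃ σ : Equiv.Perm (Fin n), ∀ i, Y i ω = X (σ i) ω)
    (hsorted : ∀ ω, ∀ i j : Fin n, i ≤ j → Y j ω ≤ Y i ω)
    (k₀ k : ℕ) (hk₀ : k₀ < k) (hk : k < n - 1) :
    ∫ ω,
        (((k₀ : ℝ) + 1) / ((k : ℝ) - (k₀ : ℝ))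
            * Real.log (Y ⟨k₀, by omega⟩ ω / Y ⟨k, by omega⟩ ω)
          + (1 / ((k : ℝ) - (k₀ : ℝ)))
            * ∑ i ∈ Finset.Ico (k₀ + 1) k,
                Real.log (Y ⟨i % n, Nat.mod_lt i (by omega)⟩ ω / Y ⟨k, by omega⟩ ω)) ∂μ
      = ξ := by
  have hpos (j : Fin n) : ∀ᵐ ω ∂μ, 0 < Y j ω :=
    (ae_one_le_orderStat hXm hpareto1 hperm).mono fun ω hω ↦ one_pos.trans_le (hω j)
  have hmom := integral_log_orderStat hξ hXm hindep hpareto hpareto1 hperm hsorted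
  have hdiv (a b : Fin n) := integral_log_div (hpos a) (hpos b) (hmom a).1 (hmom b).1
  have hmean (a b : ℕ) (ha : a < n) (hb : b < n) :
      ∫ ω, Real.log (Y ⟨a, ha⟩ ω / Y ⟨b, hb⟩ ω) ∂μ
        = ξ * (harmonic b - harmonic a : ℚ) := by
    rw [(hdiv _ _).2, (hmom _).2, (hmom _).2]
    push_cast
    ring
  rw [integral_add ((hdiv _ _).1.const_mul _)
      ((integrable_finsetSum _ fun i _ ↦ (hdiv _ _).1).const_mul _),
    integral_const_mul, integral_const_mul, integral_finsetSum _ fun i _ ↦ (hdiv _ _).1, hmean,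
    sum_congr rfl fun i _ ↦ hmean _ _ _ _,
    sum_congr rfl fun i hi ↦ by rw [Nat.mod_eq_of_lt (by have := (mem_Ico.1 hi).2; omega)]]
  have hweights : ((k₀ : ℝ) + 1) * (harmonic k - harmonic k₀ : ℚ)
      + ∑ i ∈ Ico (k₀ + 1) k, ((harmonic k - harmonic i : ℚ) : ℝ) = k - k₀ := by
    exact_mod_cast add_one_mul_harmonic_sub_add_sum_Ico_harmonic_sub hk₀
  have hk' : (k : ℝ) - k₀ ≠ 0 := sub_ne_zero.2 (by exact_mod_cast hk₀.ne')
  calc _ = ξ / (k - k₀) * (((k₀ : ℝ) + 1) * (harmonic k - harmonic k₀ : ℚ)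
        + ∑ i ∈ Ico (k₀ + 1) k, ((harmonic k - harmonic i : ℚ) : ℝ)) := by
        rw [← mul_sum]
        ring
    _ = ξ := by rw [hweights, div_mul_cancel₀ _ hk']
end

section
/- Let β ∈ (0, 1) and let X and Y be independent, identically distributed nonnegative random variables with Pareto survival function P(X > x) = x^{−β} for x ≥ 1 (an infinite-mean Pareto-type heavy-tailed law). For q ∈ (0,1) define the Value-at-Risk VaR_q(Z) = inf{ z ∈ ℝ : P(Z ≤ z) ≥ q }. Then Value-at-Risk is superadditive for such pooled risks at all sufficiently high confidence levels: there exists q₀ ∈ (0,1) such that for every q ∈ (q₀, 1), VaR_q(X + Y) > VaR_q(X) + VaR_q(Y). -/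
set_option maxHeartbeats 800000

open MeasureTheory Filter Set ProbabilityTheory

/-- The Value-at-Risk at confidence level `q`: the left `q`-quantile
`VaR_q(Z) = inf { z : P(Z ≤ z) ≥ q }`. -/
noncomputable def VaR {Ω : Type*} [MeasurableSpace Ω] (μ : Measure Ω)
    (Z : Ω → ℝ) (q : ℝ) : ℝ :=
  sInf {z : ℝ | q ≤ (μ {ω | Z ω ≤ z}).toReal}

private lemma prob_le_eq_aux {Ω : Type*} [MeasurableSpace Ω] (μ : Measure Ω)
    [IsProbabilityMeasure μ] {Z : Ω → ℝ} (hZ : Measurable Z) (z : ℝ) :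
    (μ {ω | Z ω ≤ z}).toReal = 1 - (μ {ω | z < Z ω}).toReal := by
  have h1 : {ω | Z ω ≤ z} = {ω | z < Z ω}ᶜ := by ext ω; simp [not_lt]
  have hm : MeasurableSet {ω | z < Z ω} := hZ measurableSet_Ioi
  rw [h1, measure_compl hm (measure_ne_top μ _), measure_univ,
    ENNReal.toReal_sub_of_le prob_le_one (by simp)]
  simp

/-- For `β ∈ (0,1)` and independent identically distributed Pareto
risks `X, Y` with `P(X > x) = x^{-β}` for `x ≥ 1` (infinite mean), Value-at-Risk is
superadditive at all sufficiently high confidence levels: there is `q₀ ∈ (0,1)` such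
that `VaR_q(X + Y) > VaR_q(X) + VaR_q(Y)` for every `q ∈ (q₀, 1)`. -/
theorem var_superadditive_for_infinite_mean_pareto
    {Ω : Type*} [MeasurableSpace Ω] (μ : Measure Ω) [IsProbabilityMeasure μ]
    (β : ℝ) (hβ : β ∈ Set.Ioo (0 : ℝ) 1)
    (X Y : Ω → ℝ) (hX : Measurable X) (hY : Measurable Y)
    (hindep : IndepFun X Y μ)
    (hXpareto : ∀ x : ℝ, 1 ≤ x → μ {ω | x < X ω} = ENNReal.ofReal (x ^ (-β)))
    (hXpareto1 : ∀ x : ℝ, x < 1 → μ {ω | x < X ω} = 1)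
    (hYpareto : ∀ x : ℝ, 1 ≤ x → μ {ω | x < Y ω} = ENNReal.ofReal (x ^ (-β)))
    (hYpareto1 : ∀ x : ℝ, x < 1 → μ {ω | x < Y ω} = 1) :
    ∃ q₀ ∈ Set.Ioo (0 : ℝ) 1, ∀ q ∈ Set.Ioo q₀ 1,
      VaR μ X q + VaR μ Y q < VaR μ (fun ω => X ω + Y ω) q := by
  obtain ⟨hβ0, hβ1⟩ := hβ
  have hS : Measurable (fun ω => X ω + Y ω) := hX.add hY
  -- choose s₀ with 2 < s₀ and s₀ ^ β < 2
  set s₀ : ℝ := (2 + (2:ℝ) ^ (1/β)) / 2 with hs₀def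
  have h2lt : (2:ℝ) < (2:ℝ) ^ (1/β) := by
    calc (2:ℝ) = 2 ^ (1:ℝ) := (Real.rpow_one 2).symm
    _ < 2 ^ (1/β) := Real.rpow_lt_rpow_of_exponent_lt one_lt_two (by
        rw [lt_div_iff₀ hβ0]; linarith)
  have hs₀2 : 2 < s₀ := by rw [hs₀def]; linarith
  have hs₀lt : s₀ < 2 ^ (1/β) := by rw [hs₀def]; linarith
  have hs₀pos : 0 < s₀ := by linarith
  have hs₀βlt : s₀ ^ β < 2 := by
    calc s₀ ^ β < ((2:ℝ) ^ (1/β)) ^ β := Real.rpow_lt_rpow hs₀pos.le hs₀lt hβ0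
    _ = (2:ℝ) ^ ((1/β) * β) := by rw [← Real.rpow_mul (by norm_num)]
    _ = 2 := by rw [one_div, inv_mul_cancel₀ (ne_of_gt hβ0), Real.rpow_one]
  have hs₀β1 : 1 ≤ s₀ ^ β := Real.one_le_rpow (by linarith) hβ0.le
  have hs₀βpos : 0 < s₀ ^ β := by linarith
  set c : ℝ := 2 / s₀ ^ β with hcdef
  have hc1 : 1 < c := (one_lt_div hs₀βpos).mpr hs₀βlt
  refine ⟨max (2 - c) (1/2), ⟨lt_max_of_lt_right (by norm_num),
    max_lt (by linarith) (by norm_num)⟩, ?_⟩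
  rintro q ⟨hq0, hq1⟩
  have hq2c : 2 - c < q := lt_of_le_of_lt (le_max_left _ _) hq0
  have hqhalf : (1:ℝ)/2 < q := lt_of_le_of_lt (le_max_right _ _) hq0
  have hqpos : 0 < q := by linarith
  set u : ℝ := 1 - q with hudef
  have hu0 : 0 < u := by simp [hudef]; linarith
  have hu1 : u < 1 := by simp [hudef]; linarith
  have huc : u < c - 1 := by simp [hudef]; linarith
  -- t = (1-q)^(-1/β)
  set t : ℝ := u ^ (-(1/β)) with htdef
  have ht0 : 0 < t := Real.rpow_pos_of_pos hu0 _
  have ht1 : 1 ≤ t := by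
    calc (1:ℝ) = u ^ (0:ℝ) := (Real.rpow_zero u).symm
    _ ≤ u ^ (-(1/β)) := Real.rpow_le_rpow_of_exponent_ge hu0 hu1.le (neg_nonpos.mpr (by positivity))
  have htβ : t ^ (-β) = u := by
    rw [htdef, ← Real.rpow_mul hu0.le]
    have : -(1/β) * -β = 1 := by field_simp
    rw [this, Real.rpow_one]
  -- VaR of X and Y are at most t
  have hvarX : VaR μ X q ≤ t := by
    apply csInf_le
    · refine ⟨0, fun z hz => ?_⟩
      by_contra hzneg
      push_neg at hzneg
      have : (μ {ω | X ω ≤ z}).toReal = 0 := by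
        rw [prob_le_eq_aux μ hX, hXpareto1 z (by linarith)]; simp
      rw [Set.mem_setOf_eq, this] at hz
      linarith
    · show q ≤ (μ {ω | X ω ≤ t}).toReal
      rw [prob_le_eq_aux μ hX, hXpareto t ht1,
        ENNReal.toReal_ofReal (Real.rpow_nonneg (by linarith) _), htβ]
      linarith
  have hvarY : VaR μ Y q ≤ t := by
    apply csInf_le
    · refine ⟨0, fun z hz => ?_⟩
      by_contra hzneg
      push_neg at hzneg
      have : (μ {ω | Y ω ≤ z}).toReal = 0 := by
        rw [prob_le_eq_aux μ hY, hYpareto1 z (by linarith)]; simp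
      rw [Set.mem_setOf_eq, this] at hz
      linarith
    · show q ≤ (μ {ω | Y ω ≤ t}).toReal
      rw [prob_le_eq_aux μ hY, hYpareto t ht1,
        ENNReal.toReal_ofReal (Real.rpow_nonneg (by linarith) _), htβ]
      linarith
  -- the set defining VaR of the sum is nonempty
  have hnonempty : ∃ z, q ≤ (μ {ω | X ω + Y ω ≤ z}).toReal := by
    set w : ℝ := (2/u) ^ (1/β) with hwdef
    have hw1 : 1 ≤ w := Real.one_le_rpow (by
      rw [le_div_iff₀ hu0]; linarith) (by positivity)
    have hwβ : w ^ (-β) = u / 2 := by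
      rw [hwdef, ← Real.rpow_mul (by positivity)]
      have : 1/β * -β = -1 := by field_simp
      rw [this, Real.rpow_neg_one, inv_div]
    have hsub : {ω | 2*w < X ω + Y ω} ⊆ {ω | w < X ω} ∪ {ω | w < Y ω} := by
      intro ω hω
      simp only [Set.mem_setOf_eq, Set.mem_union] at *
      by_contra h
      push_neg at h
      linarith [h.1, h.2]
    have hmes : (μ {ω | 2*w < X ω + Y ω}).toReal ≤ u := by
      have h1 : μ {ω | 2*w < X ω + Y ω} ≤ ENNReal.ofReal u := by
        calc μ {ω | 2*w < X ω + Y ω} ≤ μ ({ω | w < X ω} ∪ {ω | w < Y ω}) :=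
              measure_mono hsub
        _ ≤ μ {ω | w < X ω} + μ {ω | w < Y ω} := measure_union_le _ _
        _ = ENNReal.ofReal (u/2) + ENNReal.ofReal (u/2) := by
              rw [hXpareto w hw1, hYpareto w hw1, hwβ]
        _ = ENNReal.ofReal u := by
              rw [← ENNReal.ofReal_add (by linarith) (by linarith)]; ring_nf
      calc (μ {ω | 2*w < X ω + Y ω}).toReal ≤ (ENNReal.ofReal u).toReal :=
            ENNReal.toReal_mono ENNReal.ofReal_ne_top h1
      _ = u := ENNReal.toReal_ofReal hu0.le
    refine ⟨2*w, ?_⟩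
    rw [prob_le_eq_aux μ hS]
    simp only [hudef] at hmes ⊢
    linarith
  -- key: P(X+Y ≤ s₀ t) < q
  have hst1 : 1 ≤ s₀ * t := one_le_mul_of_one_le_of_one_le (by linarith) ht1
  have hkey : (μ {ω | X ω + Y ω ≤ s₀ * t}).toReal < q := by
    set s : ℝ := s₀ * t with hsdef
    set v : ℝ := s ^ (-β) with hvdef
    have hv0 : 0 ≤ v := Real.rpow_nonneg (by linarith) _
    have hveq : v = (s₀ ^ β)⁻¹ * u := by
      rw [hvdef, hsdef, Real.mul_rpow hs₀pos.le ht0.le, htβ, Real.rpow_neg hs₀pos.le]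
    have hvu : v ≤ u := by
      rw [hveq]
      calc (s₀ ^ β)⁻¹ * u ≤ 1 * u := by
            apply mul_le_mul_of_nonneg_right _ hu0.le
            exact inv_le_one_of_one_le₀ hs₀β1
      _ = u := one_mul u
    have h2v : 2 * v = c * u := by rw [hveq, hcdef]; field_simp
    -- measure of A, B, A ∩ B
    have hA : μ {ω | s < X ω} = ENNReal.ofReal v := hXpareto s hst1
    have hB : μ {ω | s < Y ω} = ENNReal.ofReal v := hYpareto s hst1
    have hABi : μ ({ω | s < X ω} ∩ {ω | s < Y ω}) = ENNReal.ofReal v * ENNReal.ofReal v := by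
      have h := hindep.measure_inter_preimage_eq_mul (Set.Ioi s) (Set.Ioi s)
        measurableSet_Ioi measurableSet_Ioi
      rw [show X ⁻¹' Set.Ioi s = {ω | s < X ω} from rfl,
        show Y ⁻¹' Set.Ioi s = {ω | s < Y ω} from rfl] at h
      rw [h, hA, hB]
    have hAmes : MeasurableSet {ω | s < X ω} := hX measurableSet_Ioi
    have hBmes : MeasurableSet {ω | s < Y ω} := hY measurableSet_Ioi
    have hunion : (μ ({ω | s < X ω} ∪ {ω | s < Y ω})).toReal = v + v - v * v := by
      have h1 := measure_union_add_inter {ω | s < X ω} hBmes (μ := μ)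
      have h2 : (μ ({ω | s < X ω} ∪ {ω | s < Y ω})).toReal
          + (μ ({ω | s < X ω} ∩ {ω | s < Y ω})).toReal
          = (μ {ω | s < X ω}).toReal + (μ {ω | s < Y ω}).toReal := by
        rw [← ENNReal.toReal_add (measure_ne_top μ _) (measure_ne_top μ _),
          ← ENNReal.toReal_add (measure_ne_top μ _) (measure_ne_top μ _), h1]
      rw [hA, hB, hABi, ENNReal.toReal_ofReal hv0,
        ← ENNReal.ofReal_mul hv0, ENNReal.toReal_ofReal (by positivity)] at h2
      linarith
    -- null sets
    have hX0 : μ {ω | X ω ≤ 0} = 0 := by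
      have h1 : {ω | X ω ≤ 0} = {ω | (0:ℝ) < X ω}ᶜ := by ext ω; simp [not_lt]
      have hm : MeasurableSet {ω | (0:ℝ) < X ω} := hX measurableSet_Ioi
      rw [h1, measure_compl hm (measure_ne_top μ _), hXpareto1 0 (by norm_num)]
      simp
    have hY0 : μ {ω | Y ω ≤ 0} = 0 := by
      have h1 : {ω | Y ω ≤ 0} = {ω | (0:ℝ) < Y ω}ᶜ := by ext ω; simp [not_lt]
      have hm : MeasurableSet {ω | (0:ℝ) < Y ω} := hY measurableSet_Ioi
      rw [h1, measure_compl hm (measure_ne_top μ _), hYpareto1 0 (by norm_num)]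
      simp
    -- A ∪ B essentially included in {S > s}
    have hincl : {ω | s < X ω} ∪ {ω | s < Y ω}
        ⊆ {ω | s < X ω + Y ω} ∪ ({ω | X ω ≤ 0} ∪ {ω | Y ω ≤ 0}) := by
      rintro ω (hω | hω) <;> simp only [Set.mem_setOf_eq, Set.mem_union] at *
      · rcases le_or_gt (Y ω) 0 with h | h
        · right; right; exact h
        · left; linarith
      · rcases le_or_gt (X ω) 0 with h | h
        · right; left; exact h
        · left; linarith
    have htail : v + v - v * v ≤ (μ {ω | s < X ω + Y ω}).toReal := by
      have h1 : μ ({ω | s < X ω} ∪ {ω | s < Y ω}) ≤ μ {ω | s < X ω + Y ω} := by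
        calc μ ({ω | s < X ω} ∪ {ω | s < Y ω})
            ≤ μ ({ω | s < X ω + Y ω} ∪ ({ω | X ω ≤ 0} ∪ {ω | Y ω ≤ 0})) :=
              measure_mono hincl
        _ ≤ μ {ω | s < X ω + Y ω} + μ ({ω | X ω ≤ 0} ∪ {ω | Y ω ≤ 0}) :=
              measure_union_le _ _
        _ ≤ μ {ω | s < X ω + Y ω} + (μ {ω | X ω ≤ 0} + μ {ω | Y ω ≤ 0}) := by
              gcongr; exact measure_union_le _ _
        _ = μ {ω | s < X ω + Y ω} := by rw [hX0, hY0]; simp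
      calc v + v - v * v = (μ ({ω | s < X ω} ∪ {ω | s < Y ω})).toReal := hunion.symm
      _ ≤ (μ {ω | s < X ω + Y ω}).toReal := ENNReal.toReal_mono (measure_ne_top μ _) h1
    have harith : u < v + v - v * v := by nlinarith [mul_le_mul hvu hvu hv0 hu0.le]
    rw [prob_le_eq_aux μ hS]
    have : u < (μ {ω | s < X ω + Y ω}).toReal := lt_of_lt_of_le harith htail
    simp only [hudef] at this
    linarith
  -- conclude
  have hvarS : s₀ * t ≤ VaR μ (fun ω => X ω + Y ω) q := by
    apply le_csInf
    · obtain ⟨z, hz⟩ := hnonempty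
      exact ⟨z, hz⟩
    · intro z hz
      by_contra h
      push_neg at h
      have hmono : μ {ω | X ω + Y ω ≤ z} ≤ μ {ω | X ω + Y ω ≤ s₀ * t} :=
        measure_mono (fun ω hω => le_trans hω h.le)
      have := ENNReal.toReal_mono (measure_ne_top μ _) hmono
      rw [Set.mem_setOf_eq] at hz
      linarith
  calc VaR μ X q + VaR μ Y q ≤ t + t := add_le_add hvarX hvarY
  _ = 2 * t := by ring
  _ < s₀ * t := by nlinarith
  _ ≤ VaR μ (fun ω => X ω + Y ω) q := hvarS
end
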